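/- Assume h : ℝ^p → [0,+∞] is convex, proper, the minimization problem defining β̂ has at least one solution, and h(β*) < +∞. Then for every realization of ε one has lim_{t→+∞} H(t) = inf_{t>0} H(t) ≤ ‖X(β̂ − β*)‖, where H(t) = (1/t)·sup_{β∈ℝ^p : ‖X(β−β*)‖ ≤ t} (εᵀX(β−β*) + h(β*) − h(β)). -/
import Mathlib


open scoped ENNReal

/-- Euclidean norm of a vector in `ℝ^k`. -/
noncomputable def l2norm {k : ℕ} (v : Fin k → ℝ) : ℝ := Real.sqrt (∑ i, (v i) ^ 2)

/-- Euclidean inner product on `ℝ^k`. -/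
noncomputable def dotp {k : ℕ} (u v : Fin k → ℝ) : ℝ := ∑ i, u i * v i

/-- `H(t) = (1/t) · sup_{β : ‖X(β-β*)‖ ≤ t} (εᵀX(β-β*) + h(β*) - h(β))`. -/
noncomputable def Hval {n p : ℕ} (X : Matrix (Fin n) (Fin p) ℝ) (bs : Fin p → ℝ)
    (h : (Fin p → ℝ) → ℝ≥0∞) (e : Fin n → ℝ) (t : ℝ) : ℝ :=
  sSup {x : ℝ | ∃ b : Fin p → ℝ, l2norm (X.mulVec (b - bs)) ≤ t ∧ h b ≠ ⊤ ∧
      x = dotp e (X.mulVec (b - bs)) + (h bs).toReal - (h b).toReal} / t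

lemma l2norm_nonneg {k : ℕ} (v : Fin k → ℝ) : 0 ≤ l2norm v := Real.sqrt_nonneg _

lemma sq_l2norm {k : ℕ} (v : Fin k → ℝ) : l2norm v ^ 2 = ∑ i, (v i) ^ 2 :=
  Real.sq_sqrt (Finset.sum_nonneg fun i _ => sq_nonneg _)

lemma l2norm_zero {k : ℕ} : l2norm (0 : Fin k → ℝ) = 0 := by
  simp [l2norm]

lemma l2norm_smul {k : ℕ} (a : ℝ) (ha : 0 ≤ a) (v : Fin k → ℝ) :
    l2norm (a • v) = a * l2norm v := by
  unfold l2norm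
  have hpt : ∀ i, ((a • v) i) ^ 2 = a ^ 2 * v i ^ 2 := fun i => by
    simp [Pi.smul_apply, mul_pow]
  simp_rw [hpt, ← Finset.mul_sum, Real.sqrt_mul (sq_nonneg a), Real.sqrt_sq ha]

lemma dotp_smul {k : ℕ} (e : Fin k → ℝ) (a : ℝ) (v : Fin k → ℝ) :
    dotp e (a • v) = a * dotp e v := by
  unfold dotp; rw [Finset.mul_sum]; exact Finset.sum_congr rfl fun i _ => by
    simp [Pi.smul_apply]; ring

lemma dotp_zero {k : ℕ} (e : Fin k → ℝ) : dotp e (0 : Fin k → ℝ) = 0 := by simp [dotp]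

lemma dotp_le_l2norm {k : ℕ} (u v : Fin k → ℝ) : dotp u v ≤ l2norm u * l2norm v := by
  unfold dotp l2norm
  calc ∑ i, u i * v i ≤ |∑ i, u i * v i| := le_abs_self _
    _ = Real.sqrt ((∑ i, u i * v i) ^ 2) := (Real.sqrt_sq_eq_abs _).symm
    _ ≤ Real.sqrt ((∑ i, u i ^ 2) * ∑ i, v i ^ 2) :=
        Real.sqrt_le_sqrt (Finset.sum_mul_sq_le_sq_mul_sq _ _ _)
    _ = _ := Real.sqrt_mul (Finset.sum_nonneg fun i _ => sq_nonneg _) _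

lemma sum_sub_sq {k : ℕ} (x z : Fin k → ℝ) :
    ∑ i, (x i - z i) ^ 2 = ∑ i, x i ^ 2 - 2 * ∑ i, x i * z i + ∑ i, z i ^ 2 := by
  rw [Finset.mul_sum, ← Finset.sum_sub_distrib, ← Finset.sum_add_distrib]
  exact Finset.sum_congr rfl fun i _ => by ring


lemma sum_mix_sq {k : ℕ} (a : ℝ) (w w' : Fin k → ℝ) :
    ∑ i, (a * w i + (1 - a) * w' i) ^ 2 =
      a * ∑ i, w i ^ 2 + (1 - a) * ∑ i, w' i ^ 2 - a * (1 - a) * ∑ i, (w i - w' i) ^ 2 := by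
  rw [Finset.mul_sum, Finset.mul_sum, Finset.mul_sum, ← Finset.sum_add_distrib,
    ← Finset.sum_sub_distrib]
  exact Finset.sum_congr rfl fun i _ => by ring

/-- `lim_{t→∞} H(t) = inf_{t>0} H(t) ≤ ‖X(β̂-β*)‖`. -/
theorem limit_of_H_lower_bounds_prediction_error {n p : ℕ}
    (X : Matrix (Fin n) (Fin p) ℝ) (bs : Fin p → ℝ) (ε : Fin n → ℝ)
    (y : Fin n → ℝ) (hy : y = X.mulVec bs + ε)
    (h : (Fin p → ℝ) → ℝ≥0∞)
    (hconv : ∀ b₁ b₂ : Fin p → ℝ, ∀ a : ℝ, 0 ≤ a → a ≤ 1 →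
      h (a • b₁ + (1 - a) • b₂) ≤ ENNReal.ofReal a * h b₁ + ENNReal.ofReal (1 - a) * h b₂)
    (hproper : ∃ b : Fin p → ℝ, h b ≠ ⊤)
    (hexists : ∀ (y' : Fin n → ℝ) (X' : Matrix (Fin n) (Fin p) ℝ),
      ∃ bhat' : Fin p → ℝ, ∀ b : Fin p → ℝ,
        ENNReal.ofReal (l2norm (X'.mulVec bhat' - y') ^ 2) + 2 * h bhat' ≤
          ENNReal.ofReal (l2norm (X'.mulVec b - y') ^ 2) + 2 * h b)
    (hfin : h bs ≠ ⊤)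
    (bhat : Fin p → ℝ)
    (hmin : ∀ b : Fin p → ℝ,
      ENNReal.ofReal (l2norm (X.mulVec bhat - y) ^ 2) + 2 * h bhat ≤
        ENNReal.ofReal (l2norm (X.mulVec b - y) ^ 2) + 2 * h b) :
    Filter.Tendsto (Hval X bs h ε) Filter.atTop
        (nhds (sInf (Hval X bs h ε '' Set.Ioi (0 : ℝ)))) ∧
    sInf (Hval X bs h ε '' Set.Ioi (0 : ℝ)) ≤ l2norm (X.mulVec (bhat - bs)) := by
  classical
  set f : (Fin p → ℝ) → ℝ := fun b =>
    dotp ε (X.mulVec (b - bs)) + (h bs).toReal - (h b).toReal with hf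
  set S : ℝ → Set ℝ := fun t =>
    {x : ℝ | ∃ b : Fin p → ℝ, l2norm (X.mulVec (b - bs)) ≤ t ∧ h b ≠ ⊤ ∧ x = f b} with hS
  have hH : ∀ t, Hval X bs h ε t = sSup (S t) / t := fun t => rfl
  have h2fin : ∀ b : Fin p → ℝ, h b ≠ ⊤ → (2 : ℝ≥0∞) * h b ≠ ⊤ := fun b hb =>
    ENNReal.mul_ne_top (by norm_num) hb
  have hbhat : h bhat ≠ ⊤ := by
    intro htop
    have h1 := hmin bs
    rw [htop, ENNReal.mul_top (by norm_num), add_top] at h1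
    exact (ENNReal.add_ne_top.2 ⟨ENNReal.ofReal_ne_top, h2fin bs hfin⟩) (top_le_iff.mp h1)
  -- real-valued minimality
  have hFmin : ∀ b : Fin p → ℝ, h b ≠ ⊤ →
      l2norm (X.mulVec bhat - y) ^ 2 + 2 * (h bhat).toReal ≤
        l2norm (X.mulVec b - y) ^ 2 + 2 * (h b).toReal := by
    intro b hb
    have h1 := hmin b
    have hrhs : ENNReal.ofReal (l2norm (X.mulVec b - y) ^ 2) + 2 * h b ≠ ⊤ :=
      ENNReal.add_ne_top.2 ⟨ENNReal.ofReal_ne_top, h2fin b hb⟩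
    have h2 := ENNReal.toReal_mono hrhs h1
    rw [ENNReal.toReal_add ENNReal.ofReal_ne_top (h2fin _ hbhat),
        ENNReal.toReal_add ENNReal.ofReal_ne_top (h2fin _ hb),
        ENNReal.toReal_ofReal (sq_nonneg _), ENNReal.toReal_ofReal (sq_nonneg _),
        ENNReal.toReal_mul, ENNReal.toReal_mul] at h2
    norm_num at h2
    exact h2
  -- real-valued convexity
  have hconvR : ∀ (b₁ b₂ : Fin p → ℝ), h b₁ ≠ ⊤ → h b₂ ≠ ⊤ → ∀ a : ℝ, 0 ≤ a → a ≤ 1 →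
      h (a • b₁ + (1 - a) • b₂) ≠ ⊤ ∧
      (h (a • b₁ + (1 - a) • b₂)).toReal ≤ a * (h b₁).toReal + (1 - a) * (h b₂).toReal := by
    intro b₁ b₂ h₁ h₂ a ha0 ha1
    have hc := hconv b₁ b₂ a ha0 ha1
    have hm₁ : ENNReal.ofReal a * h b₁ ≠ ⊤ := ENNReal.mul_ne_top ENNReal.ofReal_ne_top h₁
    have hm₂ : ENNReal.ofReal (1 - a) * h b₂ ≠ ⊤ := ENNReal.mul_ne_top ENNReal.ofReal_ne_top h₂
    have hrfin : ENNReal.ofReal a * h b₁ + ENNReal.ofReal (1 - a) * h b₂ ≠ ⊤ :=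
      ENNReal.add_ne_top.2 ⟨hm₁, hm₂⟩
    refine ⟨ne_top_of_le_ne_top hrfin hc, ?_⟩
    have h3 := ENNReal.toReal_mono hrfin hc
    rwa [ENNReal.toReal_add hm₁ hm₂, ENNReal.toReal_mul, ENNReal.toReal_mul,
      ENNReal.toReal_ofReal ha0, ENNReal.toReal_ofReal (by linarith : (0:ℝ) ≤ 1 - a)] at h3
  -- strong optimality
  have hstrong : ∀ b : Fin p → ℝ, h b ≠ ⊤ →
      l2norm (X.mulVec bhat - y) ^ 2 + 2 * (h bhat).toReal +
        l2norm (X.mulVec (b - bhat)) ^ 2 ≤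
      l2norm (X.mulVec b - y) ^ 2 + 2 * (h b).toReal := by
    intro b hb
    set q : ℝ := l2norm (X.mulVec (b - bhat)) ^ 2 with hq
    have hq0 : 0 ≤ q := sq_nonneg _
    have hmain : ∀ a : ℝ, 0 < a → a ≤ 1 →
        l2norm (X.mulVec bhat - y) ^ 2 + 2 * (h bhat).toReal + q ≤
          l2norm (X.mulVec b - y) ^ 2 + 2 * (h b).toReal + a * q := by
      intro a ha0 ha1
      obtain ⟨hmfin, hmconv⟩ := hconvR b bhat hb hbhat a ha0.le ha1
      have hquad : l2norm (X.mulVec (a • b + (1 - a) • bhat) - y) ^ 2 =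
          a * l2norm (X.mulVec b - y) ^ 2 + (1 - a) * l2norm (X.mulVec bhat - y) ^ 2
            - a * (1 - a) * q := by
        have hv : X.mulVec (a • b + (1 - a) • bhat) - y =
            fun i => a * (X.mulVec b - y) i + (1 - a) * (X.mulVec bhat - y) i := by
          funext i
          simp [Matrix.mulVec_add, Matrix.mulVec_smul, Pi.add_apply, Pi.sub_apply,
            Pi.smul_apply, smul_eq_mul]
          ring
        have hv2 : X.mulVec (b - bhat) =
            fun i => (X.mulVec b - y) i - (X.mulVec bhat - y) i := by
          funext i
          simp [Matrix.mulVec_sub, Pi.sub_apply]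
        rw [hv, hq, hv2, sq_l2norm, sq_l2norm, sq_l2norm, sq_l2norm]
        exact sum_mix_sq a _ _
      have hFm := hFmin _ hmfin
      rw [hquad] at hFm
      -- multiply through: from hFm and hmconv derive result
      have step : a * (l2norm (X.mulVec bhat - y) ^ 2 + 2 * (h bhat).toReal + q) ≤
          a * (l2norm (X.mulVec b - y) ^ 2 + 2 * (h b).toReal + a * q) := by
        nlinarith [hmconv, hFm]
      exact le_of_mul_le_mul_left step ha0
    refine le_of_forall_pos_le_add ?_
    intro δ hδ
    have ha0 : 0 < min 1 (δ / (q + 1)) := lt_min one_pos (div_pos hδ (by linarith))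
    have ha1 : min 1 (δ / (q + 1)) ≤ 1 := min_le_left _ _
    have haq : min 1 (δ / (q + 1)) * q ≤ δ := by
      calc min 1 (δ / (q + 1)) * q ≤ (δ / (q + 1)) * q :=
            mul_le_mul_of_nonneg_right (min_le_right _ _) hq0
        _ ≤ δ := by
            rw [div_mul_eq_mul_div, div_le_iff₀ (by linarith : (0:ℝ) < q + 1)]
            nlinarith
    have := hmain _ ha0 ha1
    linarith
  -- notation for the prediction error
  have hr0 : 0 ≤ l2norm (X.mulVec (bhat - bs)) := l2norm_nonneg _
  -- key linear upper bound on f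
  have hkey : ∀ b : Fin p → ℝ, h b ≠ ⊤ →
      f b ≤ dotp (X.mulVec (b - bs)) (X.mulVec (bhat - bs)) +
        (f bhat - l2norm (X.mulVec (bhat - bs)) ^ 2) := by
    intro b hb
    have hst := hstrong b hb
    have hXb : X.mulVec b - y = fun i => X.mulVec (b - bs) i - ε i := by
      funext i
      simp [hy, Matrix.mulVec_sub, Pi.sub_apply, Pi.add_apply]
      ring
    have hXbh : X.mulVec bhat - y = fun i => X.mulVec (bhat - bs) i - ε i := by
      funext i
      simp [hy, Matrix.mulVec_sub, Pi.sub_apply, Pi.add_apply]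
      ring
    have hXbb : X.mulVec (b - bhat) =
        fun i => X.mulVec (b - bs) i - X.mulVec (bhat - bs) i := by
      funext i
      simp [Matrix.mulVec_sub, Pi.sub_apply]
    rw [hXb, hXbh, hXbb, sq_l2norm, sq_l2norm, sq_l2norm, sum_sub_sq, sum_sub_sq,
      sum_sub_sq] at hst
    have hdε : ∀ v : Fin n → ℝ, dotp ε v = ∑ i, v i * ε i := by
      intro v
      exact Finset.sum_congr rfl fun i _ => mul_comm _ _
    have hrsq : l2norm (X.mulVec (bhat - bs)) ^ 2 = ∑ i, (X.mulVec (bhat - bs) i) ^ 2 :=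
      sq_l2norm _
    simp only [hf]
    rw [hdε, hdε, show dotp (X.mulVec (b - bs)) (X.mulVec (bhat - bs)) =
      ∑ i, X.mulVec (b - bs) i * X.mulVec (bhat - bs) i from rfl, sq_l2norm]
    linarith
  -- membership of 0
  have hmem0 : ∀ t : ℝ, 0 ≤ t → (0 : ℝ) ∈ S t := by
    intro t ht
    refine ⟨bs, ?_, hfin, ?_⟩
    · simp [sub_self, Matrix.mulVec_zero, l2norm_zero, ht]
    · simp [hf, sub_self, Matrix.mulVec_zero, dotp_zero]
  -- upper bound on S t
  have hub : ∀ t : ℝ, ∀ x ∈ S t,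
      x ≤ t * l2norm (X.mulVec (bhat - bs)) + (f bhat - l2norm (X.mulVec (bhat - bs)) ^ 2) := by
    rintro t x ⟨b, hbt, hbfin, rfl⟩
    have h1 := hkey b hbfin
    have h2 : dotp (X.mulVec (b - bs)) (X.mulVec (bhat - bs)) ≤
        t * l2norm (X.mulVec (bhat - bs)) :=
      le_trans (dotp_le_l2norm _ _) (mul_le_mul_of_nonneg_right hbt hr0)
    linarith
  have hbddS : ∀ t : ℝ, BddAbove (S t) := fun t => ⟨_, fun x hx => hub t x hx⟩
  have hneS : ∀ t : ℝ, 0 ≤ t → (S t).Nonempty := fun t ht => ⟨0, hmem0 t ht⟩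
  -- nonnegativity and upper bound of Hval
  have hH0 : ∀ t : ℝ, 0 < t → 0 ≤ Hval X bs h ε t := by
    intro t ht
    rw [hH]
    exact div_nonneg (le_csSup (hbddS t) (hmem0 t ht.le)) ht.le
  have hHub : ∀ t : ℝ, 0 < t → Hval X bs h ε t ≤ l2norm (X.mulVec (bhat - bs)) +
      (f bhat - l2norm (X.mulVec (bhat - bs)) ^ 2) / t := by
    intro t ht
    rw [hH]
    have h1 : sSup (S t) ≤ t * l2norm (X.mulVec (bhat - bs)) +
        (f bhat - l2norm (X.mulVec (bhat - bs)) ^ 2) := csSup_le (hneS t ht.le) (hub t)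
    rw [div_le_iff₀ ht]
    calc sSup (S t) ≤ _ := h1
      _ = (l2norm (X.mulVec (bhat - bs)) +
          (f bhat - l2norm (X.mulVec (bhat - bs)) ^ 2) / t) * t := by
        field_simp
  -- antitonicity
  have hanti : ∀ s t : ℝ, 0 < s → s ≤ t → Hval X bs h ε t ≤ Hval X bs h ε s := by
    intro s t hs hst
    have ht : (0 : ℝ) < t := lt_of_lt_of_le hs hst
    have hsup : sSup (S t) ≤ (t / s) * sSup (S s) := by
      apply csSup_le (hneS t ht.le)
      rintro x ⟨b, hbt, hbfin, rfl⟩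
      have ha0 : 0 < s / t := div_pos hs ht
      have ha1 : s / t ≤ 1 := (div_le_one ht).2 hst
      obtain ⟨hmfin, hmconv⟩ := hconvR b bs hbfin hfin (s / t) ha0.le ha1
      have hmu : X.mulVec ((s / t) • b + (1 - s / t) • bs - bs) =
          (s / t) • X.mulVec (b - bs) := by
        have hmb : (s / t) • b + (1 - s / t) • bs - bs = (s / t) • (b - bs) := by
          funext i
          simp [Pi.add_apply, Pi.sub_apply, Pi.smul_apply, smul_eq_mul]
          ring
        rw [hmb, Matrix.mulVec_smul]
      have hmem : f ((s / t) • b + (1 - s / t) • bs) ∈ S s := by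
        refine ⟨_, ?_, hmfin, rfl⟩
        rw [hmu, l2norm_smul _ ha0.le]
        calc (s / t) * l2norm (X.mulVec (b - bs)) ≤ (s / t) * t :=
              mul_le_mul_of_nonneg_left hbt ha0.le
          _ = s := by field_simp
      have hfm : (s / t) * f b ≤ f ((s / t) • b + (1 - s / t) • bs) := by
        simp only [hf]
        rw [hmu, dotp_smul]
        nlinarith [hmconv]
      have h3 : (s / t) * f b ≤ sSup (S s) := le_trans hfm (le_csSup (hbddS s) hmem)
      have hts : (t / s) * (s / t) = 1 := by field_simp
      calc f b = (t / s) * ((s / t) * f b) := by rw [← mul_assoc, hts, one_mul]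
        _ ≤ (t / s) * sSup (S s) :=
            mul_le_mul_of_nonneg_left h3 (le_of_lt (div_pos ht hs))
    rw [hH t, hH s]
    rw [div_le_div_iff₀ ht hs]
    calc sSup (S t) * s ≤ ((t / s) * sSup (S s)) * s :=
          mul_le_mul_of_nonneg_right hsup hs.le
      _ = sSup (S s) * t := by field_simp
  -- the infimum
  have himg_ne : (Hval X bs h ε '' Set.Ioi (0 : ℝ)).Nonempty :=
    ⟨Hval X bs h ε 1, ⟨1, by norm_num, rfl⟩⟩
  have himg_bdd : BddBelow (Hval X bs h ε '' Set.Ioi (0 : ℝ)) := by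
    refine ⟨0, ?_⟩
    rintro x ⟨t, ht, rfl⟩
    exact hH0 t ht
  have hLle : ∀ t : ℝ, 0 < t →
      sInf (Hval X bs h ε '' Set.Ioi (0 : ℝ)) ≤ Hval X bs h ε t := fun t ht =>
    csInf_le himg_bdd ⟨t, ht, rfl⟩
  constructor
  · rw [Metric.tendsto_atTop]
    intro δ hδ
    obtain ⟨x, hxmem, hxlt⟩ := Real.lt_sInf_add_pos himg_ne hδ
    obtain ⟨t₀, ht₀, rfl⟩ := hxmem
    refine ⟨t₀, fun t ht => ?_⟩
    have ht0 : (0 : ℝ) < t := lt_of_lt_of_le ht₀ ht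
    have h1 := hLle t ht0
    have h2 := hanti t₀ t ht₀ ht
    rw [Real.dist_eq, abs_sub_lt_iff]
    constructor <;> linarith
  · refine le_of_forall_pos_le_add ?_
    intro δ hδ
    set C : ℝ := f bhat - l2norm (X.mulVec (bhat - bs)) ^ 2 with hC
    have ht0 : (0 : ℝ) < max 1 (C / δ) := lt_of_lt_of_le one_pos (le_max_left _ _)
    have hCt : C / max 1 (C / δ) ≤ δ := by
      rw [div_le_iff₀ ht0]
      rcases le_or_gt C 0 with hCneg | hCpos
      · nlinarith
      · calc C = δ * (C / δ) := by field_simp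
          _ ≤ δ * max 1 (C / δ) := mul_le_mul_of_nonneg_left (le_max_right _ _) hδ.le
    calc sInf (Hval X bs h ε '' Set.Ioi (0 : ℝ)) ≤ Hval X bs h ε (max 1 (C / δ)) :=
          hLle _ ht0
      _ ≤ l2norm (X.mulVec (bhat - bs)) + C / max 1 (C / δ) := hHub _ ht0
      _ ≤ l2norm (X.mulVec (bhat - bs)) + δ := by linarith
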